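/- arXiv:2101.00485 — 11 statements merged into one kernel-verified Lean document; each statement's English description precedes it below -/
import Mathlib

section
/- (Duality theorem) Let M be an epistemic model with preferences and M^c its converse model. Then for every world w of M and every formula φ of Φ, w ⊨ φ in M if and only if w ⊨ τ(φ) in M^c. -/
namespace EmotionLogic

/-- The language Φ: φ ::= p | ¬φ | φ→φ | Nφ | K_aφ | H_aφ | S_aφ. -/
inductive Formula (A P : Type) : Type
  | var : P → Formula A P
  | neg : Formula A P → Formula A P
  | imp : Formula A P → Formula A P → Formula A P
  | nec : Formula A P → Formula A P
  | know : A → Formula A P → Formula A P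
  | happy : A → Formula A P → Formula A P
  | sad : A → Formula A P → Formula A P

variable {A P : Type}

/-- φ ∧ ψ defined from ¬ and → in the standard way. -/
def Formula.and (φ ψ : Formula A P) : Formula A P := .neg (.imp φ (.neg ψ))

/-- φ ∨ ψ defined from ¬ and → in the standard way. -/
def Formula.or (φ ψ : Formula A P) : Formula A P := .imp (.neg φ) ψ

/-- φ ↔ ψ defined from ¬ and → in the standard way. -/
def Formula.iff (φ ψ : Formula A P) : Formula A P := (φ.imp ψ).and (ψ.imp φ)

/-- N̄φ abbreviates ¬N¬φ. -/
def Formula.nbar (φ : Formula A P) : Formula A P := .neg (.nec (.neg φ))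

/-- An epistemic model with preferences. -/
structure Model (A P : Type) where
  W : Type
  indist : A → W → W → Prop
  indist_equiv : ∀ a, Equivalence (indist a)
  pref : A → W → W → Prop
  pref_irrefl : ∀ a w, ¬ pref a w w
  pref_trans : ∀ a {u v w}, pref a u v → pref a v w → pref a u w
  val : P → Set W

/-- Satisfaction relation w ⊨ φ. -/
def Satisfies (M : Model A P) : M.W → Formula A P → Prop
  | w, .var p => w ∈ M.val p
  | w, .neg φ => ¬ Satisfies M w φ
  | w, .imp φ ψ => Satisfies M w φ → Satisfies M w ψ
  | _, .nec φ => ∀ u, Satisfies M u φ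
  | w, .know a φ => ∀ u, M.indist a w u → Satisfies M u φ
  | w, .happy a φ =>
      (∀ u, M.indist a w u → Satisfies M u φ) ∧
      (∀ u u', ¬ Satisfies M u φ → Satisfies M u' φ → M.pref a u u') ∧
      (∃ u, ¬ Satisfies M u φ)
  | w, .sad a φ =>
      (∀ u, M.indist a w u → Satisfies M u φ) ∧
      (∀ u u', Satisfies M u φ → ¬ Satisfies M u' φ → M.pref a u u') ∧
      (∃ u, ¬ Satisfies M u φ)

/-- The converse model: preferences are reversed. -/
def Model.converse (M : Model A P) : Model A P where
  W := M.W
  indist := M.indist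
  indist_equiv := M.indist_equiv
  pref := fun a u v => M.pref a v u
  pref_irrefl := fun a w h => M.pref_irrefl a w h
  pref_trans := fun a _ _ _ h1 h2 => M.pref_trans a h2 h1
  val := M.val

/-- The translation τ swapping H and S. -/
def tau : Formula A P → Formula A P
  | .var p => .var p
  | .neg φ => .neg (tau φ)
  | .imp φ ψ => .imp (tau φ) (tau ψ)
  | .nec φ => .nec (tau φ)
  | .know a φ => .know a (tau φ)
  | .happy a φ => .sad a (tau φ)
  | .sad a φ => .happy a (tau φ)

/-- Membership in the sublanguage Φ^{-S} (no occurrence of the modality S). -/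
def NoSad : Formula A P → Prop
  | .var _ => True
  | .neg φ => NoSad φ
  | .imp φ ψ => NoSad φ ∧ NoSad ψ
  | .nec φ => NoSad φ
  | .know _ φ => NoSad φ
  | .happy _ φ => NoSad φ
  | .sad _ _ => False

/-- Membership in the sublanguage Φ^{-H} (no occurrence of the modality H). -/
def NoHappy : Formula A P → Prop
  | .var _ => True
  | .neg φ => NoHappy φ
  | .imp φ ψ => NoHappy φ ∧ NoHappy ψ
  | .nec φ => NoHappy φ
  | .know _ φ => NoHappy φ
  | .happy _ _ => False
  | .sad _ φ => NoHappy φ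


/-- duality theorem for the converse model and τ. -/
theorem duality {A P : Type} (M : Model A P) (w : M.W) (φ : Formula A P) :
    Satisfies M w φ ↔ Satisfies M.converse w (tau φ) := by
  induction φ generalizing w with
  | var p => simp [Satisfies, tau, Model.converse]
  | neg φ ih => simp [Satisfies, tau, ih]
  | imp φ ψ ih1 ih2 => simp [Satisfies, tau, ih1, ih2]
  | nec φ ih => simp only [Satisfies, tau]; exact forall_congr' fun u => ih u
  | know a φ ih =>
      simp only [Satisfies, tau]
      exact forall_congr' fun u => imp_congr Iff.rfl (ih u)
  | happy a φ ih =>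
      simp only [Satisfies, tau, Model.converse]
      constructor
      · rintro ⟨h1, h2, u, hu⟩
        exact ⟨fun u hu => (ih u).mp (h1 u hu),
          fun u u' hu hu' => h2 u' u (fun h => hu' ((ih u').mp h)) ((ih u).mpr hu),
          u, fun h => hu ((ih u).mpr h)⟩
      · rintro ⟨h1, h2, u, hu⟩
        exact ⟨fun u hu => (ih u).mpr (h1 u hu),
          fun u u' hu hu' => h2 u' u ((ih u').mp hu') (fun h => hu ((ih u).mpr h)),
          u, fun h => hu ((ih u).mp h)⟩
  | sad a φ ih =>
      simp only [Satisfies, tau, Model.converse]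
      constructor
      · rintro ⟨h1, h2, u, hu⟩
        exact ⟨fun u hu => (ih u).mp (h1 u hu),
          fun u u' hu hu' => h2 u' u ((ih u').mpr hu') (fun h => hu ((ih u).mp h)),
          u, fun h => hu ((ih u).mpr h)⟩
      · rintro ⟨h1, h2, u, hu⟩
        exact ⟨fun u hu => (ih u).mpr (h1 u hu),
          fun u u' hu hu' => h2 u' u (fun h => hu' ((ih u').mpr h)) ((ih u).mp hu),
          u, fun h => hu ((ih u).mp h)⟩

end EmotionLogic
end

section
/- In the left model M_l, w ⊭ H_a φ for every world w ∈ {w1, w2, w3} and every formula φ ∈ Φ. -/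
namespace EmotionLogic

variable {A P : Type}

/-- Indistinguishability relation with equivalence classes {w1} and {w2,w3}
    (worlds w1, w2, w3 are 0, 1, 2 : Fin 3). -/
abbrev indist3 (x y : Fin 3) : Prop := x = y ∨ (x ≠ 0 ∧ y ≠ 0)

/-- Preference of the left model: w1 ≺ w2 and w3 ≺ w2. -/
abbrev prefLeft (x y : Fin 3) : Prop := (x = 0 ∧ y = 1) ∨ (x = 2 ∧ y = 1)

lemma indist3_equiv : Equivalence indist3 :=
  ⟨fun x => Or.inl rfl, by decide, by decide⟩

lemma prefLeft_irrefl : ∀ w : Fin 3, ¬ prefLeft w w := by decide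

lemma prefLeft_trans : ∀ {u v w : Fin 3}, prefLeft u v → prefLeft v w → prefLeft u w := by
  decide

/-- The left model M_l. -/
def leftModel : Model Unit Unit where
  W := Fin 3
  indist := fun _ => indist3
  indist_equiv := fun _ => indist3_equiv
  pref := fun _ => prefLeft
  pref_irrefl := fun _ => prefLeft_irrefl
  pref_trans := fun _ => prefLeft_trans
  val := fun _ => {x | x = 0 ∨ x = 2}

/-- The right model M_r: same as M_l but with the empty preference relation. -/
def rightModel : Model Unit Unit where
  W := Fin 3
  indist := fun _ => indist3
  indist_equiv := fun _ => indist3_equiv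
  pref := fun _ _ _ => False
  pref_irrefl := fun _ _ h => h
  pref_trans := fun _ {_ _ _} h _ => h.elim
  val := fun _ => {x | x = 0 ∨ x = 2}


/-- in the left model, no world satisfies H_a φ for any φ. -/
theorem left_no_happy (w : Fin 3) (φ : Formula Unit Unit) :
    ¬ Satisfies leftModel w (Formula.happy () φ) := by
  rintro ⟨ha, hb, u, hu⟩
  have e0 : leftModel.W := (0 : Fin 3)
  let v0 : leftModel.W := (0 : Fin 3)
  let v2 : leftModel.W := (2 : Fin 3)
  by_cases h2 : Satisfies leftModel v2 φ
  · rcases hb u v2 hu h2 with ⟨_, h⟩ | ⟨_, h⟩ <;> exact absurd h (by decide)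
  · by_cases h0 : Satisfies leftModel v0 φ
    · rcases hb u v0 hu h0 with ⟨_, h⟩ | ⟨_, h⟩ <;> exact absurd h (by decide)
    · fin_cases w
      · exact h0 (ha v0 (Or.inl rfl))
      · exact h2 (ha v2 (show indist3 1 2 by decide))
      · exact h2 (ha v2 (show indist3 2 2 by decide))

end EmotionLogic
end

section
/- In the right model M_r, w ⊭ H_a φ for every world w ∈ {w1, w2, w3} and every formula φ ∈ Φ. -/
namespace EmotionLogic

variable {A P : Type}

/-- in the right model, no world satisfies H_a φ for any φ. -/
theorem right_no_happy (w : Fin 3) (φ : Formula Unit Unit) :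
    ¬ Satisfies rightModel w (Formula.happy () φ) := by
  rintro ⟨h1, h2, ⟨u, hu⟩⟩
  exact h2 u w hu (h1 w (Or.inl rfl))

end EmotionLogic
end

section
/- For every world w ∈ {w1, w2, w3} and every formula φ of the sublanguage Φ^{-S}, w ⊨ φ in the left model M_l if and only if w ⊨ φ in the right model M_r. -/
namespace EmotionLogic

variable {A P : Type}

/-- the left and right models agree on all Φ^{-S} formulae. -/
theorem left_right_agree (w : Fin 3) (φ : Formula Unit Unit) (h : NoSad φ) :
    Satisfies leftModel w φ ↔ Satisfies rightModel w φ := by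
  induction φ generalizing w with
  | var p => exact Iff.rfl
  | neg φ ih => exact not_congr (ih w h)
  | imp φ ψ ihφ ihψ => exact imp_congr (ihφ w h.1) (ihψ w h.2)
  | nec φ ih => exact forall_congr' fun u => ih u h
  | know a φ ih => exact forall_congr' fun u => imp_congr Iff.rfl (ih u h)
  | happy a φ ih =>
    constructor
    · rintro ⟨ha, hb, u0, hu0⟩
      exfalso
      by_cases hw : w = 0
      · have hQ0 : Satisfies leftModel (0 : Fin 3) φ := ha (0 : Fin 3) (by subst hw; exact Or.inl rfl)
        rcases hb u0 (0 : Fin 3) hu0 hQ0 with ⟨_, h01⟩ | ⟨_, h01⟩ <;> exact absurd h01 (by decide)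
      · have hQ2 : Satisfies leftModel (2 : Fin 3) φ := ha (2 : Fin 3) (Or.inr ⟨hw, by decide⟩)
        rcases hb u0 (2 : Fin 3) hu0 hQ2 with ⟨_, h21⟩ | ⟨_, h21⟩ <;> exact absurd h21 (by decide)
    · rintro ⟨ha, hb, u0, hu0⟩
      exact absurd (hb u0 w hu0 (ha w (Or.inl rfl))) (fun f => f)
  | sad a φ ih => exact absurd h (fun f => f)

end EmotionLogic
end

section
/- For every agent a, every formula φ ∈ Φ, and E ∈ {H, S}, the formula E_a φ → K_a φ is a theorem of the proof system: ⊢ E_a φ → K_a φ. -/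
namespace EmotionLogic

variable {A P : Type}

/-- Boolean evaluation of a formula where all non-propositional subformulae
    (variables and formulae whose outermost connective is a modality) are
    treated as atoms valued by `v`. -/
def evalProp (v : Formula A P → Bool) : Formula A P → Bool
  | .var p => v (.var p)
  | .neg φ => !(evalProp v φ)
  | .imp φ ψ => !(evalProp v φ) || evalProp v ψ
  | .nec φ => v (.nec φ)
  | .know a φ => v (.know a φ)
  | .happy a φ => v (.happy a φ)
  | .sad a φ => v (.sad a φ)

/-- A propositional tautology in the language Φ. -/
def Tautology (φ : Formula A P) : Prop := ∀ v, evalProp v φ = true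

/-- Theorems of the proof system: propositional tautologies, the ten axiom
    schemes, the Modus Ponens rule and the Necessitation rule. -/
inductive Prv : Formula A P → Prop
  | taut {φ} : Tautology φ → Prv φ
  | truthN {φ} : Prv ((Formula.nec φ).imp φ)
  | truthK {a φ} : Prv ((Formula.know a φ).imp φ)
  | truthH {a φ} : Prv ((Formula.happy a φ).imp φ)
  | truthS {a φ} : Prv ((Formula.sad a φ).imp φ)
  | distN {φ ψ} :
      Prv ((Formula.nec (φ.imp ψ)).imp ((Formula.nec φ).imp (Formula.nec ψ)))
  | distK {a φ ψ} :
      Prv ((Formula.know a (φ.imp ψ)).imp ((Formula.know a φ).imp (Formula.know a ψ)))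
  | negIntroN {φ} :
      Prv ((Formula.neg (Formula.nec φ)).imp (Formula.nec (Formula.neg (Formula.nec φ))))
  | negIntroK {a φ} :
      Prv ((Formula.neg (Formula.know a φ)).imp
        (Formula.know a (Formula.neg (Formula.know a φ))))
  | knowNec {a φ} : Prv ((Formula.nec φ).imp (Formula.know a φ))
  | emoIntroH {a φ} : Prv ((Formula.happy a φ).imp (Formula.know a (Formula.happy a φ)))
  | emoIntroS {a φ} : Prv ((Formula.sad a φ).imp (Formula.know a (Formula.sad a φ)))
  | emoConsist {a φ} : Prv ((Formula.happy a φ).imp (Formula.neg (Formula.sad a φ)))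
  | coherHH {a φ ψ} :
      Prv ((((Formula.happy a φ).nbar).and ((Formula.happy a ψ).nbar)).imp
        ((Formula.nec (φ.imp ψ)).or (Formula.nec (ψ.imp φ))))
  | coherSS {a φ ψ} :
      Prv ((((Formula.sad a φ).nbar).and ((Formula.sad a ψ).nbar)).imp
        ((Formula.nec (φ.imp ψ)).or (Formula.nec (ψ.imp φ))))
  | coherHS {a φ ψ} :
      Prv ((((Formula.happy a φ).nbar).and ((Formula.sad a ψ).nbar)).imp
        ((Formula.nec (φ.imp (Formula.neg ψ))).or (Formula.nec ((Formula.neg ψ).imp φ))))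
  | counterH {a φ} : Prv ((Formula.happy a φ).imp (Formula.neg (Formula.nec φ)))
  | counterS {a φ} : Prv ((Formula.sad a φ).imp (Formula.neg (Formula.nec φ)))
  | predictH {a φ} :
      Prv ((((Formula.happy a φ).nbar).or ((Formula.sad a (Formula.neg φ)).nbar)).imp
        ((Formula.know a φ).imp (Formula.happy a φ)))
  | predictS {a φ} :
      Prv ((((Formula.happy a (Formula.neg φ)).nbar).or ((Formula.sad a φ).nbar)).imp
        ((Formula.know a φ).imp (Formula.sad a φ)))
  | substH {a φ ψ} :
      Prv ((Formula.nec (φ.iff ψ)).imp ((Formula.happy a φ).imp (Formula.happy a ψ)))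
  | substS {a φ ψ} :
      Prv ((Formula.nec (φ.iff ψ)).imp ((Formula.sad a φ).imp (Formula.sad a ψ)))
  | mp {φ ψ} : Prv (φ.imp ψ) → Prv φ → Prv ψ
  | necR {φ} : Prv φ → Prv (Formula.nec φ)

/-- X ⊢ φ: derivable from theorems of the system and the set X using only
    the Modus Ponens inference rule. -/
inductive Deriv (X : Set (Formula A P)) : Formula A P → Prop
  | thm {φ} : Prv φ → Deriv X φ
  | hyp {φ} : φ ∈ X → Deriv X φ
  | mp {φ ψ} : Deriv X (φ.imp ψ) → Deriv X φ → Deriv X ψ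


/-- ⊢ E_a φ → K_a φ for E ∈ {H, S}. -/
theorem emotion_implies_knowledge {A P : Type} (a : A) (φ : Formula A P)
    (E : Formula A P → Formula A P)
    (hE : E = Formula.happy a ∨ E = Formula.sad a) :
    Prv ((E φ).imp (Formula.know a φ)) := by
  have syl : ∀ {χ ψ ρ : Formula A P}, Prv (χ.imp ψ) → Prv (ψ.imp ρ) → Prv (χ.imp ρ) := by
    intro χ ψ ρ h1 h2
    have t : Tautology ((χ.imp ψ).imp ((ψ.imp ρ).imp (χ.imp ρ))) := by
      intro v
      simp only [evalProp]
      cases evalProp v χ <;> cases evalProp v ψ <;> cases evalProp v ρ <;> simp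
    exact Prv.mp (Prv.mp (Prv.taut t) h1) h2
  rcases hE with h | h <;> subst h
  · exact syl Prv.emoIntroH
      (Prv.mp Prv.distK (Prv.mp Prv.knowNec (Prv.necR Prv.truthH)))
  · exact syl Prv.emoIntroS
      (Prv.mp Prv.distK (Prv.mp Prv.knowNec (Prv.necR Prv.truthS)))

end EmotionLogic
end

section
/- (Soundness of Coherence of Potential Emotions, same emotion) Let w be a world of an epistemic model with preferences, a an agent, φ, ψ ∈ Φ, and E ∈ {H, S}. If w ⊨ N̄E_a φ and w ⊨ N̄E_a ψ, then either w ⊨ N(φ→ψ) or w ⊨ N(ψ→φ). -/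
namespace EmotionLogic

variable {A P : Type}

/-- soundness of Coherence of Potential Emotions (same emotion E ∈ {H,S}). -/
theorem coherence_same_sound {A P : Type} (M : Model A P) (w : M.W) (a : A)
    (φ ψ : Formula A P) (E : Formula A P → Formula A P)
    (hE : E = Formula.happy a ∨ E = Formula.sad a)
    (h1 : Satisfies M w ((E φ).nbar)) (h2 : Satisfies M w ((E ψ).nbar)) :
    Satisfies M w (Formula.nec (φ.imp ψ)) ∨ Satisfies M w (Formula.nec (ψ.imp φ)) := by
  by_contra h
  push_neg at h
  obtain ⟨hn1, hn2⟩ := h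
  simp only [Satisfies, Formula.nbar, not_forall, not_not, Classical.not_imp] at h1 h2 hn1 hn2
  obtain ⟨u1, hu1⟩ := h1
  obtain ⟨u2, hu2⟩ := h2
  obtain ⟨x, hxφ, hxψ⟩ := hn1
  obtain ⟨y, hyψ, hyφ⟩ := hn2
  rcases hE with rfl | rfl
  · simp only [Satisfies] at hu1 hu2
    exact M.pref_irrefl a x (M.pref_trans a (hu2.2.1 x y hxψ hyψ) (hu1.2.1 y x hyφ hxφ))
  · simp only [Satisfies] at hu1 hu2
    exact M.pref_irrefl a x (M.pref_trans a (hu1.2.1 x y hxφ hyφ) (hu2.2.1 y x hyψ hxψ))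

end EmotionLogic
end

section
/- (Soundness of Coherence of Potential Emotions, mixed emotions) Let w be a world of an epistemic model with preferences, a an agent, and φ, ψ ∈ Φ. If w ⊨ N̄H_a φ and w ⊨ N̄S_a ψ, then either w ⊨ N(φ→¬ψ) or w ⊨ N(¬ψ→φ). -/
namespace EmotionLogic

variable {A P : Type}

/-- soundness of Coherence of Potential Emotions (mixed emotions). -/
theorem coherence_mixed_sound {A P : Type} (M : Model A P) (w : M.W) (a : A)
    (φ ψ : Formula A P)
    (h1 : Satisfies M w ((Formula.happy a φ).nbar))
    (h2 : Satisfies M w ((Formula.sad a ψ).nbar)) :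
    Satisfies M w (Formula.nec (φ.imp (Formula.neg ψ))) ∨
    Satisfies M w (Formula.nec ((Formula.neg ψ).imp φ)) := by
  simp only [Formula.nbar, Satisfies, not_forall, not_not] at h1 h2
  obtain ⟨u, hH⟩ := h1
  obtain ⟨v, hS⟩ := h2
  obtain ⟨-, hHp, -⟩ := hH
  obtain ⟨-, hSp, -⟩ := hS
  by_contra hc
  push_neg at hc
  obtain ⟨hc1, hc2⟩ := hc
  simp only [Satisfies, not_forall, not_not] at hc1 hc2
  obtain ⟨x, hx⟩ := hc1
  obtain ⟨y, hy⟩ := hc2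
  obtain ⟨hx1, hx2⟩ := hx
  obtain ⟨hy1, hy2⟩ := hy
  have p1 := hHp y x hy2 hx1
  have p2 := hSp x y hx2 hy1
  exact M.pref_irrefl a y (M.pref_trans a p1 p2)

end EmotionLogic
end

section
/- (Soundness of Emotional Predictability) Let w be a world of an epistemic model with preferences, a an agent, and φ ∈ Φ. If either w ⊨ N̄H_a φ or w ⊨ N̄S_a ¬φ, then w ⊨ K_a φ implies w ⊨ H_a φ. -/
namespace EmotionLogic

variable {A P : Type}

/-- soundness of the first Emotional Predictability axiom. -/
theorem emotional_predictability_sound {A P : Type} (M : Model A P) (w : M.W) (a : A)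
    (φ : Formula A P)
    (h : Satisfies M w ((Formula.happy a φ).nbar) ∨
         Satisfies M w ((Formula.sad a (Formula.neg φ)).nbar)) :
    Satisfies M w (Formula.know a φ) → Satisfies M w (Formula.happy a φ) := by
  intro hK
  refine ⟨hK, ?_⟩
  rcases h with h | h
  · simp only [Formula.nbar, Satisfies] at h
    push_neg at h
    obtain ⟨u, hu⟩ := h
    exact hu.2
  · simp only [Formula.nbar, Satisfies] at h
    push_neg at h
    obtain ⟨u, ha, hb, _⟩ := h
    exact ⟨hb, u, ha u ((M.indist_equiv a).refl u)⟩

end EmotionLogic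
end

section
/- (Soundness of Emotional Introspection) Let w be a world of an epistemic model with preferences, a an agent, φ ∈ Φ, and E ∈ {H, S}. If w ⊨ E_a φ, then w ⊨ K_a E_a φ. -/
namespace EmotionLogic

variable {A P : Type}

/-- soundness of Emotional Introspection for E ∈ {H, S}. -/
theorem emotional_introspection_sound {A P : Type} (M : Model A P) (w : M.W) (a : A)
    (φ : Formula A P) (E : Formula A P → Formula A P)
    (hE : E = Formula.happy a ∨ E = Formula.sad a)
    (h : Satisfies M w (E φ)) : Satisfies M w (Formula.know a (E φ)) := by
  rcases hE with rfl | rfl <;>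
  · obtain ⟨h1, h2, h3⟩ := h
    intro u hwu
    exact ⟨fun v huv => h1 v ((M.indist_equiv a).trans hwu huv), h2, h3⟩

end EmotionLogic
end

section
/- (Strong soundness) For any epistemic world w of an epistemic model with preferences, any set of formulae X ⊆ Φ, and any formula φ ∈ Φ, if w ⊨ χ for each formula χ ∈ X and X ⊢ φ, then w ⊨ φ. -/
namespace EmotionLogic

variable {A P : Type}

attribute [local instance] Classical.propDecidable

lemma eval_iff (M : Model A P) (w : M.W) (φ : Formula A P) :
    evalProp (fun ψ => decide (Satisfies M w ψ)) φ = true ↔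
      Satisfies M w φ := by
  induction φ with
  | var p => simp [evalProp]
  | neg φ ih => simp [evalProp, Satisfies, Bool.eq_false_iff, ih]
  | imp φ ψ ih1 ih2 => simp [evalProp, Satisfies, Bool.eq_false_iff, ih1, ih2]; tauto
  | nec φ ih => simp [evalProp]
  | know a φ ih => simp [evalProp]
  | happy a φ ih => simp [evalProp]
  | sad a φ ih => simp [evalProp]

lemma sat_iff (M : Model A P) (φ ψ : Formula A P) (w : M.W) :
    Satisfies M w (φ.iff ψ) ↔ (Satisfies M w φ ↔ Satisfies M w ψ) := by
  simp [Formula.iff, Formula.and, Satisfies]; tauto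

lemma sat_nbar (M : Model A P) (φ : Formula A P) (w : M.W) :
    Satisfies M w φ.nbar ↔ ∃ u, Satisfies M u φ := by
  simp [Formula.nbar, Satisfies]

lemma sound (M : Model A P) {φ : Formula A P} (h : Prv φ) :
    ∀ w, Satisfies M w φ := by
  induction h with
  | @taut φ ht =>
      intro w
      exact (eval_iff M w φ).mp (ht _)
  | truthN => intro w hw; exact hw w
  | @truthK a φ => intro w hw; exact hw w ((M.indist_equiv a).refl w)
  | @truthH a φ => intro w hw; exact hw.1 w ((M.indist_equiv a).refl w)
  | @truthS a φ => intro w hw; exact hw.1 w ((M.indist_equiv a).refl w)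
  | distN => intro w h1 h2 u; exact h1 u (h2 u)
  | distK => intro w h1 h2 u hu; exact h1 u hu (h2 u hu)
  | negIntroN => intro w hw u hu; exact hw fun v => hu v
  | @negIntroK a φ =>
      intro w hw u hu hk
      exact hw fun v hv => hk v ((M.indist_equiv a).trans ((M.indist_equiv a).symm hu) hv)
  | knowNec => intro w hw u _; exact hw u
  | @emoIntroH a φ =>
      intro w hw u hu
      exact ⟨fun v hv => hw.1 v ((M.indist_equiv a).trans hu hv), hw.2.1, hw.2.2⟩
  | @emoIntroS a φ =>
      intro w hw u hu
      exact ⟨fun v hv => hw.1 v ((M.indist_equiv a).trans hu hv), hw.2.1, hw.2.2⟩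
  | @emoConsist a φ =>
      intro w hw hs
      obtain ⟨u, hu⟩ := hw.2.2
      have hphi := hw.1 w ((M.indist_equiv a).refl w)
      have h1 := hw.2.1 u w hu hphi
      have h2 := hs.2.1 w u hphi hu
      exact M.pref_irrefl a u (M.pref_trans a h1 h2)
  | @coherHH a φ ψ =>
      intro w hw
      simp only [Formula.and, Formula.nbar, Formula.or, Satisfies, Classical.not_imp, not_not,
        not_forall] at hw ⊢
      obtain ⟨⟨u1, h1⟩, u2, h2⟩ := hw
      rintro ⟨x, hxφ, hxψ⟩ u huψ
      by_contra huφ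
      exact M.pref_irrefl a x (M.pref_trans a (h2.2.1 x u hxψ huψ) (h1.2.1 u x huφ hxφ))
  | @coherSS a φ ψ =>
      intro w hw
      simp only [Formula.and, Formula.nbar, Formula.or, Satisfies, Classical.not_imp, not_not,
        not_forall] at hw ⊢
      obtain ⟨⟨u1, h1⟩, u2, h2⟩ := hw
      rintro ⟨x, hxφ, hxψ⟩ u huψ
      by_contra huφ
      exact M.pref_irrefl a x (M.pref_trans a (h1.2.1 x u hxφ huφ) (h2.2.1 u x huψ hxψ))
  | @coherHS a φ ψ =>
      intro w hw
      simp only [Formula.and, Formula.nbar, Formula.or, Satisfies, Classical.not_imp, not_not,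
        not_forall] at hw ⊢
      obtain ⟨⟨u1, h1⟩, u2, h2⟩ := hw
      rintro ⟨x, hxφ, hxψ⟩ u huψ
      by_contra huφ
      exact M.pref_irrefl a x (M.pref_trans a (h2.2.1 x u hxψ huψ) (h1.2.1 u x huφ hxφ))
  | @counterH a φ =>
      intro w hw hn
      obtain ⟨u, hu⟩ := hw.2.2
      exact hu (hn u)
  | @counterS a φ =>
      intro w hw hn
      obtain ⟨u, hu⟩ := hw.2.2
      exact hu (hn u)
  | @predictH a φ =>
      intro w hw hk
      have hw' : ¬ Satisfies M w (Formula.happy a φ).nbar →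
          Satisfies M w (Formula.sad a (Formula.neg φ)).nbar := hw
      by_cases hx : Satisfies M w (Formula.happy a φ).nbar
      · obtain ⟨u, hu⟩ := (sat_nbar M _ w).mp hx
        exact ⟨hk, hu.2.1, hu.2.2⟩
      · obtain ⟨u, hu⟩ := (sat_nbar M _ w).mp (hw' hx)
        refine ⟨hk, fun x y hx hy => hu.2.1 x y hx (fun hn => hn hy),
          ⟨u, hu.1 u ((M.indist_equiv a).refl u)⟩⟩
  | @predictS a φ =>
      intro w hw hk
      have hw' : ¬ Satisfies M w (Formula.happy a (Formula.neg φ)).nbar →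
          Satisfies M w (Formula.sad a φ).nbar := hw
      by_cases hx : Satisfies M w (Formula.happy a (Formula.neg φ)).nbar
      · obtain ⟨u, hu⟩ := (sat_nbar M _ w).mp hx
        refine ⟨hk, fun x y hx hy => hu.2.1 x y (fun hn => hn hx) hy,
          ⟨u, hu.1 u ((M.indist_equiv a).refl u)⟩⟩
      · obtain ⟨u, hu⟩ := (sat_nbar M _ w).mp (hw' hx)
        exact ⟨hk, hu.2.1, hu.2.2⟩
  | @substH a φ ψ =>
      intro w hn hw
      have he : ∀ u, Satisfies M u φ ↔ Satisfies M u ψ :=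
        fun u => (sat_iff M φ ψ u).mp (hn u)
      exact ⟨fun u hu => (he u).mp (hw.1 u hu),
        fun u u' h1 h2 => hw.2.1 u u' (fun h => h1 ((he u).mp h)) ((he u').mpr h2),
        hw.2.2.imp fun u hu h => hu ((he u).mpr h)⟩
  | @substS a φ ψ =>
      intro w hn hw
      have he : ∀ u, Satisfies M u φ ↔ Satisfies M u ψ :=
        fun u => (sat_iff M φ ψ u).mp (hn u)
      exact ⟨fun u hu => (he u).mp (hw.1 u hu),
        fun u u' h1 h2 => hw.2.1 u u' ((he u).mpr h1) (fun h => h2 ((he u').mp h)),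
        hw.2.2.imp fun u hu h => hu ((he u).mpr h)⟩
  | mp h1 h2 ih1 ih2 => intro w; exact ih1 w (ih2 w)
  | necR h ih => intro w u; exact ih u

/-- strong soundness. -/
theorem strong_soundness {A P : Type} (M : Model A P) (w : M.W)
    (X : Set (Formula A P)) (φ : Formula A P)
    (hX : ∀ χ ∈ X, Satisfies M w χ) (hd : Deriv X φ) :
    Satisfies M w φ := by
  induction hd with
  | thm h => exact sound M h w
  | hyp h => exact hX _ h
  | mp h1 h2 ih1 ih2 => exact ih1 ih2

end EmotionLogic
end

section
/- (Strong completeness) For any set of formulae X ⊆ Φ and any formula φ ∈ Φ, if X ⊬ φ, then there exist an epistemic model with preferences and a world w of that model such that w ⊨ χ for each formula χ ∈ X and w ⊭ φ. -/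
namespace EmotionLogic

variable {A P : Type}

section Completeness
variable {A P : Type}

open Formula in
/-- Any instance of a two-variable boolean tautology works out. -/
lemma taut_A1 (φ ψ : Formula A P) : Tautology (φ.imp (ψ.imp φ)) := fun v => by
  simp only [evalProp]; cases evalProp v φ <;> cases evalProp v ψ <;> simp

lemma taut_A2 (φ ψ χ : Formula A P) :
    Tautology ((φ.imp (ψ.imp χ)).imp ((φ.imp ψ).imp (φ.imp χ))) := fun v => by
  simp only [evalProp]; cases evalProp v φ <;> cases evalProp v ψ <;> cases evalProp v χ <;> simp

lemma taut_id (φ : Formula A P) : Tautology (φ.imp φ) := fun v => by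
  simp [evalProp]

lemma taut_explosion (φ ψ : Formula A P) : Tautology (φ.imp ((Formula.neg φ).imp ψ)) := fun v => by
  simp only [evalProp]; cases evalProp v φ <;> cases evalProp v ψ <;> simp

lemma taut_clavius (φ : Formula A P) : Tautology (((Formula.neg φ).imp φ).imp φ) := fun v => by
  simp only [evalProp]; cases evalProp v φ <;> simp

lemma taut_negimp (φ ψ : Formula A P) : Tautology ((Formula.neg φ).imp (φ.imp ψ)) := fun v => by
  simp only [evalProp]; cases evalProp v φ <;> cases evalProp v ψ <;> simp

lemma taut_contra (φ ψ : Formula A P) :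
    Tautology ((φ.imp ψ).imp ((Formula.neg ψ).imp (Formula.neg φ))) := fun v => by
  simp only [evalProp]; cases evalProp v φ <;> cases evalProp v ψ <;> simp

lemma taut_imptrans (φ ψ χ : Formula A P) :
    Tautology ((φ.imp ψ).imp ((ψ.imp χ).imp (φ.imp χ))) := fun v => by
  simp only [evalProp]; cases evalProp v φ <;> cases evalProp v ψ <;> cases evalProp v χ <;> simp

lemma taut_dne (φ : Formula A P) : Tautology ((Formula.neg (Formula.neg φ)).imp φ) := fun v => by
  simp [evalProp]

lemma taut_dni (φ : Formula A P) : Tautology (φ.imp (Formula.neg (Formula.neg φ))) := fun v => by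
  simp [evalProp]

lemma taut_selfneg (φ : Formula A P) :
    Tautology ((φ.imp (Formula.neg φ)).imp (Formula.neg φ)) := fun v => by
  simp [evalProp]

/-- Modus-ponens friendly composition. -/
lemma prv_imp_trans {α β γ : Formula A P} (h1 : Prv (α.imp β)) (h2 : Prv (β.imp γ)) :
    Prv (α.imp γ) :=
  Prv.mp (Prv.mp (Prv.taut (taut_imptrans α β γ)) h1) h2

lemma prv_contra {α β : Formula A P} (h : Prv (α.imp β)) :
    Prv ((Formula.neg β).imp (Formula.neg α)) :=
  Prv.mp (Prv.taut (taut_contra α β)) h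

lemma prv_necK (a : A) {φ : Formula A P} (h : Prv φ) : Prv (Formula.know a φ) :=
  Prv.mp Prv.knowNec (Prv.necR h)

/-- monotonicity of Deriv -/
lemma deriv_mono {X Y : Set (Formula A P)} (hXY : X ⊆ Y) {ψ} (h : Deriv X ψ) : Deriv Y ψ := by
  induction h with
  | thm hp => exact Deriv.thm hp
  | hyp hm => exact Deriv.hyp (hXY hm)
  | mp _ _ ih1 ih2 => exact Deriv.mp ih1 ih2

/-- Deduction theorem. -/
theorem deduction {X : Set (Formula A P)} {φ ψ} (h : Deriv (insert φ X) ψ) :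
    Deriv X (φ.imp ψ) := by
  induction h with
  | @thm χ hp => exact Deriv.mp (Deriv.thm (Prv.taut (taut_A1 χ φ))) (Deriv.thm hp)
  | @hyp χ hm =>
    rcases hm with h | h
    · rw [h]; exact Deriv.thm (Prv.taut (taut_id φ))
    · exact Deriv.mp (Deriv.thm (Prv.taut (taut_A1 χ φ))) (Deriv.hyp h)
  | @mp α β _ _ ih1 ih2 =>
    exact Deriv.mp (Deriv.mp (Deriv.thm (Prv.taut (taut_A2 φ α β))) ih1) ih2

lemma deriv_of_empty {ψ : Formula A P} (h : Deriv (∅ : Set (Formula A P)) ψ) : Prv ψ := by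
  induction h with
  | thm hp => exact hp
  | hyp hm => exact absurd hm (Set.notMem_empty _)
  | mp _ _ ih1 ih2 => exact Prv.mp ih1 ih2

lemma deriv_finite {X : Set (Formula A P)} {ψ} (h : Deriv X ψ) :
    ∃ s : Finset (Formula A P), ↑s ⊆ X ∧ Deriv (↑s : Set (Formula A P)) ψ := by
  classical
  induction h with
  | @thm χ hp => exact ⟨∅, by simp, Deriv.thm hp⟩
  | @hyp χ hm => exact ⟨{χ}, by simpa using hm, Deriv.hyp (by simp)⟩
  | @mp α β _ _ ih1 ih2 =>
    obtain ⟨s1, hs1, hd1⟩ := ih1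
    obtain ⟨s2, hs2, hd2⟩ := ih2
    refine ⟨s1 ∪ s2, ?_, ?_⟩
    · intro x hx; simp only [Finset.coe_union, Set.mem_union] at hx
      rcases hx with hx | hx
      · exact hs1 hx
      · exact hs2 hx
    · exact Deriv.mp (deriv_mono (by simp [Finset.coe_union]) hd1)
        (deriv_mono (by simp [Finset.coe_union]) hd2)

/-- A set is consistent when it does not derive everything. -/
def Consistent (X : Set (Formula A P)) : Prop := ¬ ∀ ψ, Deriv X ψ

lemma inconsistent_of_both {X : Set (Formula A P)} {φ}
    (h1 : Deriv X φ) (h2 : Deriv X (Formula.neg φ)) : ¬ Consistent X := by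
  intro hc
  exact hc (fun ψ => Deriv.mp (Deriv.mp (Deriv.thm (Prv.taut (taut_explosion φ ψ))) h1) h2)

/-- Maximal consistent sets. -/
def MCS (Γ : Set (Formula A P)) : Prop :=
  Consistent Γ ∧ ∀ Δ, Γ ⊆ Δ → Consistent Δ → Δ = Γ

end Completeness
section Completeness2
variable {A P : Type}

lemma consistent_exists {X : Set (Formula A P)} (h : Consistent X) :
    ∃ ψ, ¬ Deriv X ψ := by
  by_contra hc; push_neg at hc; exact h hc

namespace MCS
variable {Γ : Set (Formula A P)} (hΓ : MCS Γ)
include hΓ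

lemma deriv_mem {ψ} (h : Deriv Γ ψ) : ψ ∈ Γ := by
  have hcons : Consistent (insert ψ Γ) := by
    intro hall
    apply hΓ.1
    intro χ
    exact Deriv.mp (deduction (hall χ)) h
  have := hΓ.2 _ (Set.subset_insert _ _) hcons
  rw [← this]; exact Set.mem_insert _ _

lemma prv_mem {ψ} (h : Prv ψ) : ψ ∈ Γ := hΓ.deriv_mem (Deriv.thm h)

lemma mp {α β} (h : α.imp β ∈ Γ) (ha : α ∈ Γ) : β ∈ Γ :=
  hΓ.deriv_mem (Deriv.mp (Deriv.hyp h) (Deriv.hyp ha))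

lemma neg_mem {ψ} : Formula.neg ψ ∈ Γ ↔ ψ ∉ Γ := by
  constructor
  · intro hn hp
    exact inconsistent_of_both (Deriv.hyp hp) (Deriv.hyp hn) hΓ.1
  · intro hp
    have hcons : Consistent (insert (Formula.neg ψ) Γ) := by
      intro hall
      have h1 : Deriv Γ ((Formula.neg ψ).imp ψ) := deduction (hall ψ)
      have h2 : Deriv Γ ψ := Deriv.mp (Deriv.thm (Prv.taut (taut_clavius ψ))) h1
      exact hp (hΓ.deriv_mem h2)
    have := hΓ.2 _ (Set.subset_insert _ _) hcons
    rw [← this]; exact Set.mem_insert _ _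

lemma imp_mem {α β} : α.imp β ∈ Γ ↔ (α ∈ Γ → β ∈ Γ) := by
  constructor
  · exact fun h ha => hΓ.mp h ha
  · intro h
    by_cases ha : α ∈ Γ
    · exact hΓ.mp (hΓ.prv_mem (Prv.taut (taut_A1 β α))) (h ha)
    · exact hΓ.mp (hΓ.prv_mem (Prv.taut (taut_negimp α β))) (hΓ.neg_mem.2 ha)

lemma and_mem {α β} : α.and β ∈ Γ ↔ (α ∈ Γ ∧ β ∈ Γ) := by
  unfold Formula.and
  rw [hΓ.neg_mem, hΓ.imp_mem]
  simp only [hΓ.neg_mem]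
  tauto

lemma or_mem {α β} : α.or β ∈ Γ ↔ (α ∈ Γ ∨ β ∈ Γ) := by
  unfold Formula.or
  rw [hΓ.imp_mem]
  simp only [hΓ.neg_mem]
  tauto

lemma iff_mem {α β} : α.iff β ∈ Γ ↔ (α ∈ Γ ↔ β ∈ Γ) := by
  unfold Formula.iff
  rw [hΓ.and_mem, hΓ.imp_mem, hΓ.imp_mem]
  tauto

lemma nbar_mem {α} : Formula.nbar α ∈ Γ ↔ Formula.nec (Formula.neg α) ∉ Γ := by
  unfold Formula.nbar
  exact hΓ.neg_mem

end MCS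

lemma finset_subset_chain_union {α : Type*} {c : Set (Set α)} (hc : IsChain (· ⊆ ·) c)
    {Y : Set α} (hY : Y ∈ c) (s : Finset α) (hs : ↑s ⊆ ⋃₀ c) : ∃ Z ∈ c, ↑s ⊆ Z := by
  classical
  induction s using Finset.induction_on with
  | empty => exact ⟨Y, hY, by simp⟩
  | @insert a s ha ih =>
    obtain ⟨Z, hZ, hsZ⟩ := ih (by
      intro x hx; exact hs (by simp [hx]))
    obtain ⟨Z', hZ', haZ'⟩ := hs (show a ∈ (↑(insert a s) : Set α) by simp)
    rcases hc.total hZ hZ' with h | h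
    · exact ⟨Z', hZ', by
        intro x hx
        simp only [Finset.coe_insert, Set.mem_insert_iff] at hx
        rcases hx with rfl | hx
        · exact haZ'
        · exact h (hsZ hx)⟩
    · exact ⟨Z, hZ, by
        intro x hx
        simp only [Finset.coe_insert, Set.mem_insert_iff] at hx
        rcases hx with rfl | hx
        · exact h haZ'
        · exact hsZ hx⟩

/-- Lindenbaum lemma. -/
lemma lindenbaum {X : Set (Formula A P)} (h : Consistent X) :
    ∃ Γ, X ⊆ Γ ∧ MCS Γ := by
  classical
  obtain ⟨m, hXm, hmax⟩ := zorn_subset_nonempty {Y : Set (Formula A P) | Consistent Y}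
    (fun c hcS hchain hne => by
      obtain ⟨Y, hY⟩ := hne
      refine ⟨⋃₀ c, ?_, fun s hs => Set.subset_sUnion_of_mem hs⟩
      intro hall
      obtain ⟨ψ₀, hψ₀⟩ := consistent_exists (hcS hY)
      obtain ⟨s1, hs1, hd1⟩ := deriv_finite (hall ψ₀)
      obtain ⟨s2, hs2, hd2⟩ := deriv_finite (hall (Formula.neg ψ₀))
      obtain ⟨Z, hZ, hsZ⟩ := finset_subset_chain_union hchain hY (s1 ∪ s2)
        (by intro x hx
            simp only [Finset.coe_union, Set.mem_union] at hx
            rcases hx with hx | hx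
            · exact hs1 hx
            · exact hs2 hx)
      have hZ1 : Deriv Z ψ₀ := deriv_mono (fun x hx => hsZ (by simp [hx])) hd1
      have hZ2 : Deriv Z (Formula.neg ψ₀) := deriv_mono (fun x hx => hsZ (by simp [hx])) hd2
      exact inconsistent_of_both hZ1 hZ2 (hcS hZ)) X h
  exact ⟨m, hXm, hmax.prop, fun Δ hsub hcons => (hmax.eq_of_subset hcons hsub).symm⟩

end Completeness2
section Completeness3
variable {A P : Type}

/-- B for N. -/
lemma prv_BN (ψ : Formula A P) :
    Prv (ψ.imp (Formula.nec (Formula.neg (Formula.nec (Formula.neg ψ))))) := by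
  have t : Prv ((Formula.nec (Formula.neg ψ)).imp (Formula.neg ψ)) := Prv.truthN
  have c : Prv ((Formula.neg (Formula.neg ψ)).imp
      (Formula.neg (Formula.nec (Formula.neg ψ)))) := prv_contra t
  have d : Prv (ψ.imp (Formula.neg (Formula.nec (Formula.neg ψ)))) :=
    prv_imp_trans (Prv.taut (taut_dni ψ)) c
  exact prv_imp_trans d Prv.negIntroN

/-- 4 for N. -/
lemma prv_4N (φ : Formula A P) : Prv ((Formula.nec φ).imp (Formula.nec (Formula.nec φ))) := by
  have s1 : Prv ((Formula.neg (Formula.nec φ)).imp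
      (Formula.nec (Formula.neg (Formula.nec φ)))) := Prv.negIntroN
  have c : Prv ((Formula.neg (Formula.nec (Formula.neg (Formula.nec φ)))).imp
      (Formula.neg (Formula.neg (Formula.nec φ)))) := prv_contra s1
  have c2 : Prv ((Formula.neg (Formula.nec (Formula.neg (Formula.nec φ)))).imp
      (Formula.nec φ)) := prv_imp_trans c (Prv.taut (taut_dne _))
  have c3 : Prv ((Formula.nec (Formula.neg (Formula.nec (Formula.neg (Formula.nec φ))))).imp
      (Formula.nec (Formula.nec φ))) := Prv.mp Prv.distN (Prv.necR c2)
  exact prv_imp_trans (prv_BN (Formula.nec φ)) c3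

/-- B for K. -/
lemma prv_BK (a : A) (ψ : Formula A P) :
    Prv (ψ.imp (Formula.know a (Formula.neg (Formula.know a (Formula.neg ψ))))) := by
  have t : Prv ((Formula.know a (Formula.neg ψ)).imp (Formula.neg ψ)) := Prv.truthK
  have c := prv_contra t
  have d : Prv (ψ.imp (Formula.neg (Formula.know a (Formula.neg ψ)))) :=
    prv_imp_trans (Prv.taut (taut_dni ψ)) c
  exact prv_imp_trans d Prv.negIntroK

/-- 4 for K. -/
lemma prv_4K (a : A) (φ : Formula A P) :
    Prv ((Formula.know a φ).imp (Formula.know a (Formula.know a φ))) := by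
  have s1 : Prv ((Formula.neg (Formula.know a φ)).imp
      (Formula.know a (Formula.neg (Formula.know a φ)))) := Prv.negIntroK
  have c := prv_contra s1
  have c2 : Prv ((Formula.neg (Formula.know a (Formula.neg (Formula.know a φ)))).imp
      (Formula.know a φ)) := prv_imp_trans c (Prv.taut (taut_dne _))
  have c3 : Prv ((Formula.know a (Formula.neg (Formula.know a
      (Formula.neg (Formula.know a φ))))).imp
      (Formula.know a (Formula.know a φ))) := Prv.mp Prv.distK (prv_necK a c2)
  exact prv_imp_trans (prv_BK a (Formula.know a φ)) c3

variable (Γ₀ : Set (Formula A P))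

/-- The worlds of the canonical model. -/
def Wld : Type := {Δ : Set (Formula A P) // MCS Δ ∧ ∀ ψ, Formula.nec ψ ∈ Γ₀ → ψ ∈ Δ}

variable {Γ₀}

lemma Wld.mcs (Δ : Wld Γ₀) : MCS Δ.1 := Δ.2.1

section
variable (hΓ₀ : MCS Γ₀)
include hΓ₀

/-- Derivability from the N-theory yields necessity. -/
lemma deriv_T_nec {ψ : Formula A P}
    (h : Deriv {χ | Formula.nec χ ∈ Γ₀} ψ) : Formula.nec ψ ∈ Γ₀ := by
  classical
  obtain ⟨s, hs, hd⟩ := deriv_finite h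
  clear h
  induction s using Finset.induction_on generalizing ψ with
  | empty =>
    have := deriv_of_empty (by simpa using hd)
    exact hΓ₀.prv_mem (Prv.necR this)
  | @insert χ s hχ ih =>
    rw [Finset.coe_insert] at hd hs
    have h1 : Deriv (↑s : Set (Formula A P)) (χ.imp ψ) := deduction hd
    have h2 := ih (fun x hx => hs (Set.mem_insert_of_mem _ hx)) h1
    have h3 : Formula.nec χ ∈ Γ₀ := hs (Set.mem_insert _ _)
    exact hΓ₀.mp (hΓ₀.mp (hΓ₀.prv_mem Prv.distN) h2) h3

lemma nec_mem_iff (Δ : Wld Γ₀) {ψ : Formula A P} :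
    Formula.nec ψ ∈ Δ.1 ↔ Formula.nec ψ ∈ Γ₀ := by
  constructor
  · intro h
    by_contra hn
    have h1 : Formula.neg (Formula.nec ψ) ∈ Γ₀ := hΓ₀.neg_mem.2 hn
    have h2 : Formula.nec (Formula.neg (Formula.nec ψ)) ∈ Γ₀ :=
      hΓ₀.mp (hΓ₀.prv_mem Prv.negIntroN) h1
    have h3 : Formula.neg (Formula.nec ψ) ∈ Δ.1 := Δ.2.2 _ h2
    exact (Δ.mcs.neg_mem.1 h3) h
  · intro h
    exact Δ.2.2 _ (hΓ₀.mp (hΓ₀.prv_mem (prv_4N ψ)) h)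

lemma globalN {ψ : Formula A P} :
    Formula.nec ψ ∈ Γ₀ ↔ ∀ Δ : Wld Γ₀, ψ ∈ Δ.1 := by
  constructor
  · exact fun h Δ => Δ.2.2 _ h
  · intro hall
    by_contra hn
    have hcons : Consistent (insert (Formula.neg ψ) {χ | Formula.nec χ ∈ Γ₀}) := by
      intro hd
      have h1 := deduction (hd ψ)
      have h2 : Deriv {χ | Formula.nec χ ∈ Γ₀} ψ :=
        Deriv.mp (Deriv.thm (Prv.taut (taut_clavius ψ))) h1
      exact hn (deriv_T_nec hΓ₀ h2)
    obtain ⟨Γ', hsub, hΓ'⟩ := lindenbaum hcons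
    have hW : ∀ χ, Formula.nec χ ∈ Γ₀ → χ ∈ Γ' :=
      fun χ hχ => hsub (Set.mem_insert_of_mem _ hχ)
    have : ψ ∈ Γ' := hall ⟨Γ', hΓ', hW⟩
    exact (hΓ'.neg_mem.1 (hsub (Set.mem_insert _ _))) this

end

/-- Canonical indistinguishability. -/
def indistC (a : A) (Δ Δ' : Wld Γ₀) : Prop :=
  ∀ ψ, Formula.know a ψ ∈ Δ.1 → ψ ∈ Δ'.1

lemma indistC_equiv (a : A) : Equivalence (indistC (Γ₀ := Γ₀) a) := by
  constructor
  · intro Δ ψ h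
    exact Δ.mcs.mp (Δ.mcs.prv_mem Prv.truthK) h
  · intro Δ Δ' h ψ hψ
    by_contra hn
    have h1 : Formula.know a ψ ∉ Δ.1 := fun hk => hn (Δ.mcs.mp (Δ.mcs.prv_mem Prv.truthK) hk)
    have h2 : Formula.neg (Formula.know a ψ) ∈ Δ.1 := Δ.mcs.neg_mem.2 h1
    have h3 : Formula.know a (Formula.neg (Formula.know a ψ)) ∈ Δ.1 :=
      Δ.mcs.mp (Δ.mcs.prv_mem Prv.negIntroK) h2
    have h4 := h _ h3
    exact (Δ'.mcs.neg_mem.1 h4) hψ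
  · intro Δ Δ' Δ'' h1 h2 ψ hψ
    exact h2 _ (h1 _ (Δ.mcs.mp (Δ.mcs.prv_mem (prv_4K a ψ)) hψ))

/-- Derivability from the K-theory of an MCS yields knowledge. -/
lemma deriv_K_know {Δ : Set (Formula A P)} (hΔ : MCS Δ) (a : A) {ψ : Formula A P}
    (h : Deriv {χ | Formula.know a χ ∈ Δ} ψ) : Formula.know a ψ ∈ Δ := by
  classical
  obtain ⟨s, hs, hd⟩ := deriv_finite h
  clear h
  induction s using Finset.induction_on generalizing ψ with
  | empty =>
    have := deriv_of_empty (by simpa using hd)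
    exact hΔ.prv_mem (prv_necK a this)
  | @insert χ s hχ ih =>
    rw [Finset.coe_insert] at hd hs
    have h1 : Deriv (↑s : Set (Formula A P)) (χ.imp ψ) := deduction hd
    have h2 := ih (fun x hx => hs (Set.mem_insert_of_mem _ hx)) h1
    have h3 : Formula.know a χ ∈ Δ := hs (Set.mem_insert _ _)
    exact hΔ.mp (hΔ.mp (hΔ.prv_mem Prv.distK) h2) h3

section
variable (hΓ₀ : MCS Γ₀)
include hΓ₀

/-- Existence lemma for K. -/
lemma existsK (a : A) (Δ : Wld Γ₀) {ψ : Formula A P} (h : Formula.know a ψ ∉ Δ.1) :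
    ∃ Δ' : Wld Γ₀, indistC a Δ Δ' ∧ ψ ∉ Δ'.1 := by
  have hcons : Consistent (insert (Formula.neg ψ) {χ | Formula.know a χ ∈ Δ.1}) := by
    intro hd
    have h1 := deduction (hd ψ)
    have h2 : Deriv {χ | Formula.know a χ ∈ Δ.1} ψ :=
      Deriv.mp (Deriv.thm (Prv.taut (taut_clavius ψ))) h1
    exact h (deriv_K_know Δ.mcs a h2)
  obtain ⟨Γ', hsub, hΓ'⟩ := lindenbaum hcons
  have hW : ∀ χ, Formula.nec χ ∈ Γ₀ → χ ∈ Γ' := by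
    intro χ hχ
    have h1 : Formula.nec χ ∈ Δ.1 := (nec_mem_iff hΓ₀ Δ).2 hχ
    have h2 : Formula.know a χ ∈ Δ.1 := Δ.mcs.mp (Δ.mcs.prv_mem Prv.knowNec) h1
    exact hsub (Set.mem_insert_of_mem _ h2)
  refine ⟨⟨Γ', hΓ', hW⟩, ?_, ?_⟩
  · intro χ hχ
    exact hsub (Set.mem_insert_of_mem _ hχ)
  · exact fun hmem => (hΓ'.neg_mem.1 (hsub (Set.mem_insert _ _))) hmem

end
end Completeness3
section Completeness4
variable {A P : Type}

lemma not_consistent_iff {X : Set (Formula A P)} : ¬ Consistent X ↔ ∀ ψ, Deriv X ψ :=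
  not_not

/-- Witnesses: a formula with a flag (`true` = happiness, `false` = sadness). -/
def GoodW (Γ₀ : Set (Formula A P)) (a : A) (w : Formula A P × Bool) : Prop :=
  Formula.nbar (if w.2 then Formula.happy a w.1 else Formula.sad a w.1) ∈ Γ₀

/-- The "truth set" of a witness. -/
def semW {Γ₀ : Set (Formula A P)} (w : Formula A P × Bool) (Δ : Wld Γ₀) : Prop :=
  if w.2 then w.1 ∈ Δ.1 else w.1 ∉ Δ.1

/-- The literal corresponding to a witness. -/
def litW {A P : Type} (w : Formula A P × Bool) : Formula A P :=
  if w.2 then w.1 else Formula.neg w.1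

/-- The negated literal corresponding to a witness. -/
def nlitW {A P : Type} (w : Formula A P × Bool) : Formula A P :=
  if w.2 then Formula.neg w.1 else w.1

lemma litW_mem {Γ₀ : Set (Formula A P)} (w : Formula A P × Bool) (Δ : Wld Γ₀) :
    litW w ∈ Δ.1 ↔ semW w Δ := by
  rcases w with ⟨χ, b⟩
  cases b <;> simp [litW, semW, Δ.mcs.neg_mem]

lemma nlitW_mem {Γ₀ : Set (Formula A P)} (w : Formula A P × Bool) (Δ : Wld Γ₀) :
    nlitW w ∈ Δ.1 ↔ ¬ semW w Δ := by
  rcases w with ⟨χ, b⟩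
  cases b <;> simp [nlitW, semW, Δ.mcs.neg_mem]

section
variable {Γ₀ : Set (Formula A P)} (hΓ₀ : MCS Γ₀)
include hΓ₀

lemma nbar_iff_exists {α : Formula A P} :
    Formula.nbar α ∈ Γ₀ ↔ ∃ Δ : Wld Γ₀, α ∈ Δ.1 := by
  rw [hΓ₀.nbar_mem, globalN hΓ₀]
  push_neg
  constructor
  · rintro ⟨Δ, h⟩
    exact ⟨Δ, by_contra fun hn => h (Δ.mcs.neg_mem.2 hn)⟩
  · rintro ⟨Δ, h⟩
    exact ⟨Δ, fun hn => (Δ.mcs.neg_mem.1 hn) h⟩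

lemma nec_global {ψ : Formula A P} (h : ∀ Δ : Wld Γ₀, ψ ∈ Δ.1) :
    Formula.nec ψ ∈ Γ₀ := (globalN hΓ₀).2 h

/-- The coherence axioms make witness truth sets into a chain. -/
lemma chainW (a : A) (w w' : Formula A P × Bool)
    (hw : GoodW Γ₀ a w) (hw' : GoodW Γ₀ a w') :
    (∀ Δ : Wld Γ₀, semW w Δ → semW w' Δ) ∨ (∀ Δ : Wld Γ₀, semW w' Δ → semW w Δ) := by
  rcases w with ⟨χ, b⟩
  rcases w' with ⟨χ', b'⟩
  have hand : ∀ {α β : Formula A P}, α ∈ Γ₀ → β ∈ Γ₀ → α.and β ∈ Γ₀ :=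
    fun hα hβ => hΓ₀.and_mem.2 ⟨hα, hβ⟩
  cases b <;> cases b' <;> simp only [GoodW] at hw hw' <;> simp only [semW]
  · -- sad, sad
    have hor := hΓ₀.or_mem.1 (hΓ₀.mp (hΓ₀.prv_mem (Prv.coherSS (a := a) (φ := χ) (ψ := χ')))
      (hand hw hw'))
    rcases hor with h | h
    · right
      intro Δ h1 h2
      exact h1 (Δ.mcs.mp ((globalN hΓ₀).1 h Δ) h2)
    · left
      intro Δ h1 h2
      exact h1 (Δ.mcs.mp ((globalN hΓ₀).1 h Δ) h2)
  · -- sad, happy : use coherHS with φ := χ', ψ := χ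
    have hor := hΓ₀.or_mem.1 (hΓ₀.mp (hΓ₀.prv_mem (Prv.coherHS (a := a) (φ := χ') (ψ := χ)))
      (hand hw' hw))
    rcases hor with h | h
    · -- N(χ' → ¬χ) : χ'∈Δ → χ∉Δ, i.e. sem w' ⊆ sem w
      right
      intro Δ h1 h2
      exact Δ.mcs.neg_mem.1 (Δ.mcs.mp ((globalN hΓ₀).1 h Δ) h1) h2
    · -- N(¬χ → χ') : χ∉Δ → χ'∈Δ, i.e. sem w ⊆ sem w'
      left
      intro Δ h1
      exact Δ.mcs.mp ((globalN hΓ₀).1 h Δ) (Δ.mcs.neg_mem.2 h1)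
  · -- happy, sad : use coherHS with φ := χ, ψ := χ'
    have hor := hΓ₀.or_mem.1 (hΓ₀.mp (hΓ₀.prv_mem (Prv.coherHS (a := a) (φ := χ) (ψ := χ')))
      (hand hw hw'))
    rcases hor with h | h
    · -- N(χ → ¬χ') : sem w ⊆ sem w'
      left
      intro Δ h1
      exact Δ.mcs.neg_mem.1 (Δ.mcs.mp ((globalN hΓ₀).1 h Δ) h1)
    · -- N(¬χ' → χ) : sem w' ⊆ sem w
      right
      intro Δ h1
      exact Δ.mcs.mp ((globalN hΓ₀).1 h Δ) (Δ.mcs.neg_mem.2 h1)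
  · -- happy, happy
    have hor := hΓ₀.or_mem.1 (hΓ₀.mp (hΓ₀.prv_mem (Prv.coherHH (a := a) (φ := χ) (ψ := χ')))
      (hand hw hw'))
    rcases hor with h | h
    · left
      intro Δ h1
      exact Δ.mcs.mp ((globalN hΓ₀).1 h Δ) h1
    · right
      intro Δ h1
      exact Δ.mcs.mp ((globalN hΓ₀).1 h Δ) h1

end

/-- Canonical preference relation. -/
def prefC (Γ₀ : Set (Formula A P)) (a : A) (u v : Wld Γ₀) : Prop :=
  ∃ w, GoodW Γ₀ a w ∧ ¬ semW w u ∧ semW w v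

lemma prefC_irrefl (Γ₀ : Set (Formula A P)) (a : A) (u : Wld Γ₀) : ¬ prefC Γ₀ a u u := by
  rintro ⟨w, _, h1, h2⟩; exact h1 h2

lemma prefC_trans {Γ₀ : Set (Formula A P)} (hΓ₀ : MCS Γ₀) (a : A) {u v x : Wld Γ₀}
    (h1 : prefC Γ₀ a u v) (h2 : prefC Γ₀ a v x) : prefC Γ₀ a u x := by
  obtain ⟨w1, hg1, hnu, hv⟩ := h1
  obtain ⟨w2, hg2, hnv, hx⟩ := h2
  rcases chainW hΓ₀ a w1 w2 hg1 hg2 with h | h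
  · exact absurd (h v hv) hnv
  · exact ⟨w1, hg1, hnu, h x hx⟩

/-- The canonical model. -/
def canonM {Γ₀ : Set (Formula A P)} (hΓ₀ : MCS Γ₀) : Model A P where
  W := Wld Γ₀
  indist := indistC
  indist_equiv := indistC_equiv
  pref := prefC Γ₀
  pref_irrefl := prefC_irrefl Γ₀
  pref_trans := fun a => prefC_trans hΓ₀ a
  val p := {Δ : Wld Γ₀ | Formula.var p ∈ Δ.1}

end Completeness4
section Completeness5
variable {A P : Type}

/-- A witness whose truth set lies strictly below the truth set of ξ. -/
def StrictW (Γ₀ : Set (Formula A P)) (ξ : Formula A P) (w : Formula A P × Bool) : Prop :=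
  (∀ Δ : Wld Γ₀, semW w Δ → ξ ∈ Δ.1) ∧ ¬ (∀ Δ : Wld Γ₀, ξ ∈ Δ.1 → semW w Δ)

variable {Γ₀ : Set (Formula A P)} (hΓ₀ : MCS Γ₀)
include hΓ₀

/-- Pull a finite set of extra hypotheses into world membership. -/
lemma deriv_union_global (s : Finset (Formula A P)) (ψ : Formula A P)
    (h : Deriv ({χ | Formula.nec χ ∈ Γ₀} ∪ ↑s) ψ) :
    ∀ Δ : Wld Γ₀, ↑s ⊆ Δ.1 → ψ ∈ Δ.1 := by
  classical
  induction s using Finset.induction_on generalizing ψ with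
  | empty =>
    intro Δ _
    rw [Finset.coe_empty, Set.union_empty] at h
    exact Δ.2.2 _ (deriv_T_nec hΓ₀ h)
  | @insert χ s hχ ih =>
    intro Δ hsub
    rw [Finset.coe_insert, Set.union_insert] at h
    have h1 := deduction h
    have h2 := ih _ h1 Δ (fun x hx => hsub (by simp [hx]))
    exact Δ.mcs.mp h2 (hsub (by simp))

lemma minW (a : A) (v : Wld Γ₀) (s : Finset (Formula A P))
    (hs : ∀ x ∈ s, ∃ w, GoodW Γ₀ a w ∧ semW w v ∧ litW w = x) :
    s = ∅ ∨ ∃ w, GoodW Γ₀ a w ∧ semW w v ∧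
      ∀ x ∈ s, ∀ Δ : Wld Γ₀, semW w Δ → x ∈ Δ.1 := by
  classical
  induction s using Finset.induction_on with
  | empty => exact Or.inl rfl
  | @insert x s hx ih =>
    obtain ⟨w₀, hg₀, hv₀, hl₀⟩ := hs x (by simp)
    rcases ih (fun y hy => hs y (by simp [hy])) with rfl | ⟨w₁, hg₁, hv₁, hmin⟩
    · refine Or.inr ⟨w₀, hg₀, hv₀, ?_⟩
      intro y hy Δ hsem
      simp only [Finset.mem_insert, Finset.notMem_empty, or_false] at hy
      subst hy
      exact hl₀ ▸ (litW_mem w₀ Δ).2 hsem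
    · rcases chainW hΓ₀ a w₀ w₁ hg₀ hg₁ with hcmp | hcmp
      · refine Or.inr ⟨w₀, hg₀, hv₀, ?_⟩
        intro y hy Δ hsem
        rcases Finset.mem_insert.1 hy with rfl | hy
        · exact hl₀ ▸ (litW_mem w₀ Δ).2 hsem
        · exact hmin y hy Δ (hcmp Δ hsem)
      · refine Or.inr ⟨w₁, hg₁, hv₁, ?_⟩
        intro y hy Δ hsem
        rcases Finset.mem_insert.1 hy with rfl | hy
        · exact hl₀ ▸ (litW_mem w₀ Δ).2 (hcmp Δ hsem)
        · exact hmin y hy Δ hsem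

lemma maxW (a : A) (ξ : Formula A P) (s : Finset (Formula A P))
    (hs : ∀ x ∈ s, ∃ w, GoodW Γ₀ a w ∧ StrictW Γ₀ ξ w ∧ nlitW w = x) :
    s = ∅ ∨ ∃ w, GoodW Γ₀ a w ∧ StrictW Γ₀ ξ w ∧
      ∀ x ∈ s, ∀ Δ : Wld Γ₀, ¬ semW w Δ → x ∈ Δ.1 := by
  classical
  induction s using Finset.induction_on with
  | empty => exact Or.inl rfl
  | @insert x s hx ih =>
    obtain ⟨w₀, hg₀, hst₀, hl₀⟩ := hs x (by simp)
    rcases ih (fun y hy => hs y (by simp [hy])) with rfl | ⟨w₁, hg₁, hst₁, hmax⟩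
    · refine Or.inr ⟨w₀, hg₀, hst₀, ?_⟩
      intro y hy Δ hsem
      simp only [Finset.mem_insert, Finset.notMem_empty, or_false] at hy
      subst hy
      exact hl₀ ▸ (nlitW_mem w₀ Δ).2 hsem
    · rcases chainW hΓ₀ a w₀ w₁ hg₀ hg₁ with hcmp | hcmp
      · refine Or.inr ⟨w₁, hg₁, hst₁, ?_⟩
        intro y hy Δ hsem
        rcases Finset.mem_insert.1 hy with rfl | hy
        · exact hl₀ ▸ (nlitW_mem w₀ Δ).2 (fun hs0 => hsem (hcmp Δ hs0))
        · exact hmax y hy Δ hsem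
      · refine Or.inr ⟨w₀, hg₀, hst₀, ?_⟩
        intro y hy Δ hsem
        rcases Finset.mem_insert.1 hy with rfl | hy
        · exact hl₀ ▸ (nlitW_mem w₀ Δ).2 hsem
        · exact hmax y hy Δ (fun hs1 => hsem (hcmp Δ hs1))

lemma stepA (a : A) (ξ : Formula A P)
    (hb : ∀ u v : Wld Γ₀, ξ ∉ u.1 → ξ ∈ v.1 → prefC Γ₀ a u v)
    (hc : ∃ u : Wld Γ₀, ξ ∉ u.1)
    (v : Wld Γ₀) (hv : ξ ∈ v.1) :
    ∃ w, GoodW Γ₀ a w ∧ semW w v ∧ ∀ Δ : Wld Γ₀, semW w Δ → ξ ∈ Δ.1 := by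
  classical
  set Lits : Set (Formula A P) := litW '' {w | GoodW Γ₀ a w ∧ semW w v} with hLits
  have hincon : ¬ Consistent (insert (Formula.neg ξ) ({χ | Formula.nec χ ∈ Γ₀} ∪ Lits)) := by
    intro hcons
    obtain ⟨Γ', hsub, hΓ'⟩ := lindenbaum hcons
    have hW : ∀ χ, Formula.nec χ ∈ Γ₀ → χ ∈ Γ' :=
      fun χ hχ => hsub (Set.mem_insert_of_mem _ (Or.inl hχ))
    set u : Wld Γ₀ := ⟨Γ', hΓ', hW⟩ with hu_def
    have hu : ξ ∉ u.1 := fun hm => hΓ'.neg_mem.1 (hsub (Set.mem_insert _ _)) hm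
    obtain ⟨w, hg, hnu, hsv⟩ := hb u v hu hv
    apply hnu
    have hmem : litW w ∈ Γ' := hsub (Set.mem_insert_of_mem _ (Or.inr ⟨w, ⟨hg, hsv⟩, rfl⟩))
    exact (litW_mem w u).1 hmem
  have hderiv : Deriv ({χ | Formula.nec χ ∈ Γ₀} ∪ Lits) ξ := by
    have hall := not_consistent_iff.1 hincon
    exact Deriv.mp (Deriv.thm (Prv.taut (taut_clavius ξ))) (deduction (hall ξ))
  obtain ⟨s, hs, hd⟩ := deriv_finite hderiv
  have hd2 : Deriv ({χ | Formula.nec χ ∈ Γ₀} ∪ ↑s) ξ :=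
    deriv_mono (fun x hx => Or.inr hx) hd
  have hglob := deriv_union_global hΓ₀ s ξ hd2
  set s' := s.filter (fun x => x ∈ Lits) with hs'
  have hs'lits : ∀ x ∈ s', ∃ w, GoodW Γ₀ a w ∧ semW w v ∧ litW w = x := by
    intro x hx
    obtain ⟨w, ⟨hg, hsv⟩, hl⟩ := (Finset.mem_filter.1 hx).2
    exact ⟨w, hg, hsv, hl⟩
  rcases minW hΓ₀ a v s' hs'lits with hempty | ⟨w, hg, hsv, hmin⟩
  · exfalso
    obtain ⟨u, hu⟩ := hc
    apply hu
    apply hglob u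
    intro x hx
    rcases hs hx with hxT | hxL
    · exact u.2.2 _ hxT
    · exfalso
      have hxs : x ∈ s' := Finset.mem_filter.2 ⟨Finset.mem_coe.1 hx, hxL⟩
      rw [hempty] at hxs
      exact Finset.notMem_empty _ hxs
  · refine ⟨w, hg, hsv, ?_⟩
    intro Δ hsem
    apply hglob Δ
    intro x hx
    rcases hs hx with hxT | hxL
    · exact Δ.2.2 _ hxT
    · exact hmin x (Finset.mem_filter.2 ⟨Finset.mem_coe.1 hx, hxL⟩) Δ hsem

lemma keyMain (a : A) (ξ : Formula A P)
    (hb : ∀ u v : Wld Γ₀, ξ ∉ u.1 → ξ ∈ v.1 → prefC Γ₀ a u v)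
    (hc : ∃ u : Wld Γ₀, ξ ∉ u.1)
    (hd : ∃ v : Wld Γ₀, ξ ∈ v.1) :
    ∃ w, GoodW Γ₀ a w ∧ ∀ Δ : Wld Γ₀, semW w Δ ↔ ξ ∈ Δ.1 := by
  classical
  set NL : Set (Formula A P) := nlitW '' {w | GoodW Γ₀ a w ∧ StrictW Γ₀ ξ w} with hNL
  have hcons : Consistent (insert ξ ({χ | Formula.nec χ ∈ Γ₀} ∪ NL)) := by
    intro hall
    have h1 : Deriv ({χ | Formula.nec χ ∈ Γ₀} ∪ NL) (Formula.neg ξ) :=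
      Deriv.mp (Deriv.thm (Prv.taut (taut_selfneg ξ))) (deduction (hall (Formula.neg ξ)))
    obtain ⟨s, hs, hdv⟩ := deriv_finite h1
    have hd2 : Deriv ({χ | Formula.nec χ ∈ Γ₀} ∪ ↑s) (Formula.neg ξ) :=
      deriv_mono (fun x hx => Or.inr hx) hdv
    have hglob := deriv_union_global hΓ₀ s _ hd2
    set s' := s.filter (fun x => x ∈ NL) with hs'
    have hs'nl : ∀ x ∈ s', ∃ w, GoodW Γ₀ a w ∧ StrictW Γ₀ ξ w ∧ nlitW w = x := by
      intro x hx
      obtain ⟨w, ⟨hg, hst⟩, hl⟩ := (Finset.mem_filter.1 hx).2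
      exact ⟨w, hg, hst, hl⟩
    rcases maxW hΓ₀ a ξ s' hs'nl with hempty | ⟨w, hg, hstrict, hmax⟩
    · obtain ⟨v, hv⟩ := hd
      have hneg : Formula.neg ξ ∈ v.1 := by
        apply hglob v
        intro x hx
        rcases hs hx with hxT | hxL
        · exact v.2.2 _ hxT
        · exfalso
          have hxs : x ∈ s' := Finset.mem_filter.2 ⟨Finset.mem_coe.1 hx, hxL⟩
          rw [hempty] at hxs
          exact Finset.notMem_empty _ hxs
      exact v.mcs.neg_mem.1 hneg hv
    · obtain ⟨Δs, hΔs⟩ := not_forall.1 hstrict.2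
      rw [Classical.not_imp] at hΔs
      obtain ⟨hξΔ, hnsem⟩ := hΔs
      have hneg : Formula.neg ξ ∈ Δs.1 := by
        apply hglob Δs
        intro x hx
        rcases hs hx with hxT | hxL
        · exact Δs.2.2 _ hxT
        · exact hmax x (Finset.mem_filter.2 ⟨Finset.mem_coe.1 hx, hxL⟩) Δs hnsem
      exact Δs.mcs.neg_mem.1 hneg hξΔ
  obtain ⟨Γ', hsub, hΓ'⟩ := lindenbaum hcons
  set vs : Wld Γ₀ := ⟨Γ', hΓ', fun χ hχ => hsub (Set.mem_insert_of_mem _ (Or.inl hχ))⟩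
    with hvs
  have hξv : ξ ∈ vs.1 := hsub (Set.mem_insert _ _)
  obtain ⟨w, hg, hsv, hbelow⟩ := stepA hΓ₀ a ξ hb hc vs hξv
  refine ⟨w, hg, fun Δ => ⟨hbelow Δ, ?_⟩⟩
  intro hξΔ
  by_contra hnsem
  have hstrict : StrictW Γ₀ ξ w := ⟨hbelow, fun hall => hnsem (hall Δ hξΔ)⟩
  have hmem : nlitW w ∈ Γ' := hsub (Set.mem_insert_of_mem _ (Or.inr ⟨w, ⟨hg, hstrict⟩, rfl⟩))
  exact ((nlitW_mem w vs).1 hmem) hsv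

end Completeness5
section Completeness6
variable {A P : Type}

lemma prv_happy_know (a : A) (φ : Formula A P) :
    Prv ((Formula.happy a φ).imp (Formula.know a φ)) :=
  prv_imp_trans Prv.emoIntroH (Prv.mp Prv.distK (prv_necK a Prv.truthH))

lemma prv_sad_know (a : A) (φ : Formula A P) :
    Prv ((Formula.sad a φ).imp (Formula.know a φ)) :=
  prv_imp_trans Prv.emoIntroS (Prv.mp Prv.distK (prv_necK a Prv.truthS))

variable {Γ₀ : Set (Formula A P)} (hΓ₀ : MCS Γ₀)
include hΓ₀

lemma nbar_shared (Δ : Wld Γ₀) {α : Formula A P} (h : Formula.nbar α ∈ Γ₀) :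
    Formula.nbar α ∈ Δ.1 := by
  rw [Δ.mcs.nbar_mem]
  rw [hΓ₀.nbar_mem] at h
  exact fun hm => h ((nec_mem_iff hΓ₀ Δ).1 hm)

lemma transfer_happy (a : A) {α β : Formula A P}
    (h : Formula.nbar (Formula.happy a α) ∈ Γ₀)
    (he : ∀ Δ : Wld Γ₀, α ∈ Δ.1 ↔ β ∈ Δ.1) :
    Formula.nbar (Formula.happy a β) ∈ Γ₀ := by
  obtain ⟨Δ, hΔ⟩ := (nbar_iff_exists hΓ₀).1 h
  have hiff : Formula.nec (α.iff β) ∈ Γ₀ :=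
    (globalN hΓ₀).2 fun Δ' => (Δ'.mcs.iff_mem).2 (he Δ')
  have h2 : Formula.happy a β ∈ Δ.1 :=
    Δ.mcs.mp (Δ.mcs.mp (Δ.mcs.prv_mem Prv.substH) ((nec_mem_iff hΓ₀ Δ).2 hiff)) hΔ
  exact (nbar_iff_exists hΓ₀).2 ⟨Δ, h2⟩

lemma transfer_sad (a : A) {α β : Formula A P}
    (h : Formula.nbar (Formula.sad a α) ∈ Γ₀)
    (he : ∀ Δ : Wld Γ₀, α ∈ Δ.1 ↔ β ∈ Δ.1) :
    Formula.nbar (Formula.sad a β) ∈ Γ₀ := by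
  obtain ⟨Δ, hΔ⟩ := (nbar_iff_exists hΓ₀).1 h
  have hiff : Formula.nec (α.iff β) ∈ Γ₀ :=
    (globalN hΓ₀).2 fun Δ' => (Δ'.mcs.iff_mem).2 (he Δ')
  have h2 : Formula.sad a β ∈ Δ.1 :=
    Δ.mcs.mp (Δ.mcs.mp (Δ.mcs.prv_mem Prv.substS) ((nec_mem_iff hΓ₀ Δ).2 hiff)) hΔ
  exact (nbar_iff_exists hΓ₀).2 ⟨Δ, h2⟩

lemma keyEmo (a : A) (ξ : Formula A P)
    (hb : ∀ u v : Wld Γ₀, ξ ∉ u.1 → ξ ∈ v.1 → prefC Γ₀ a u v)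
    (hc : ∃ u : Wld Γ₀, ξ ∉ u.1)
    (hd : ∃ v : Wld Γ₀, ξ ∈ v.1) :
    Formula.nbar (Formula.happy a ξ) ∈ Γ₀ ∨
      Formula.nbar (Formula.sad a (Formula.neg ξ)) ∈ Γ₀ := by
  obtain ⟨⟨χ, b⟩, hg, hiff⟩ := keyMain hΓ₀ a ξ hb hc hd
  cases b with
  | false =>
    right
    have hg' : Formula.nbar (Formula.sad a χ) ∈ Γ₀ := by simpa [GoodW] using hg
    refine transfer_sad hΓ₀ a hg' ?_
    intro Δ
    have h1 : (χ ∉ Δ.1) ↔ ξ ∈ Δ.1 := by simpa [semW] using hiff Δ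
    rw [Δ.mcs.neg_mem]
    constructor
    · intro hχ hξ
      exact h1.2 hξ hχ
    · intro hξ
      by_contra hχ
      exact hξ (h1.1 hχ)
  | true =>
    left
    have hg' : Formula.nbar (Formula.happy a χ) ∈ Γ₀ := by simpa [GoodW] using hg
    refine transfer_happy hΓ₀ a hg' ?_
    intro Δ
    have h1 := hiff Δ
    simpa [semW] using h1

theorem truth_lemma : ∀ (φ : Formula A P) (Δ : Wld Γ₀),
    Satisfies (canonM hΓ₀) Δ φ ↔ φ ∈ Δ.1 := by
  intro φ
  induction φ with
  | var p => exact fun Δ => Iff.rfl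
  | neg φ ih =>
    intro Δ
    simp only [Satisfies]
    rw [ih Δ, Δ.mcs.neg_mem]
  | imp φ ψ ihφ ihψ =>
    intro Δ
    simp only [Satisfies]
    rw [ihφ Δ, ihψ Δ, Δ.mcs.imp_mem]
  | nec φ ih =>
    intro Δ
    simp only [Satisfies]
    constructor
    · intro hsat
      exact (nec_mem_iff hΓ₀ Δ).2 ((globalN hΓ₀).2 fun Δ' => (ih Δ').1 (hsat Δ'))
    · intro hmem Δ'
      exact (ih Δ').2 ((globalN hΓ₀).1 ((nec_mem_iff hΓ₀ Δ).1 hmem) Δ')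
  | know a φ ih =>
    intro Δ
    simp only [Satisfies]
    constructor
    · intro hsat
      by_contra hn
      obtain ⟨Δ', hind, hφ⟩ := existsK hΓ₀ a Δ hn
      exact hφ ((ih Δ').1 (hsat Δ' hind))
    · intro hmem u hind
      exact (ih u).2 (hind _ hmem)
  | happy a φ ih =>
    intro Δ
    simp only [Satisfies]
    constructor
    · rintro ⟨ha, hbb, hcc⟩
      have hK : Formula.know a φ ∈ Δ.1 := by
        by_contra hn
        obtain ⟨Δ', hind, hφ⟩ := existsK hΓ₀ a Δ hn
        exact hφ ((ih Δ').1 (ha Δ' hind))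
      have hφΔ : φ ∈ Δ.1 := Δ.mcs.mp (Δ.mcs.prv_mem Prv.truthK) hK
      have hb' : ∀ u v : Wld Γ₀, φ ∉ u.1 → φ ∈ v.1 → prefC Γ₀ a u v := by
        intro u v h1 h2
        exact hbb u v (fun hs => h1 ((ih u).1 hs)) ((ih v).2 h2)
      have hc' : ∃ u : Wld Γ₀, φ ∉ u.1 := by
        obtain ⟨u, hu⟩ := hcc
        exact ⟨u, fun hm => hu ((ih u).2 hm)⟩
      have hkey := keyEmo hΓ₀ a φ hb' hc' ⟨Δ, hφΔ⟩
      have hor : (Formula.nbar (Formula.happy a φ)).or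
          (Formula.nbar (Formula.sad a (Formula.neg φ))) ∈ Δ.1 := by
        apply Δ.mcs.or_mem.2
        rcases hkey with h | h
        · exact Or.inl (nbar_shared hΓ₀ Δ h)
        · exact Or.inr (nbar_shared hΓ₀ Δ h)
      exact Δ.mcs.mp (Δ.mcs.mp (Δ.mcs.prv_mem Prv.predictH) hor) hK
    · intro hmem
      have hK : Formula.know a φ ∈ Δ.1 := Δ.mcs.mp (Δ.mcs.prv_mem (prv_happy_know a φ)) hmem
      refine ⟨?_, ?_, ?_⟩
      · intro u hind
        exact (ih u).2 (hind _ hK)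
      · intro u u' hnsat hsat
        have h1 : φ ∉ u.1 := fun hm => hnsat ((ih u).2 hm)
        have h2 : φ ∈ u'.1 := (ih u').1 hsat
        refine ⟨(φ, true), ?_, ?_, ?_⟩
        · simpa [GoodW] using (nbar_iff_exists hΓ₀).2 ⟨Δ, hmem⟩
        · simpa [semW] using h1
        · simpa [semW] using h2
      · have h1 : Formula.neg (Formula.nec φ) ∈ Δ.1 :=
          Δ.mcs.mp (Δ.mcs.prv_mem Prv.counterH) hmem
        have h2 : Formula.nec φ ∉ Γ₀ :=
          fun hm => Δ.mcs.neg_mem.1 h1 ((nec_mem_iff hΓ₀ Δ).2 hm)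
        obtain ⟨u, hu⟩ := not_forall.1 (fun hall => h2 ((globalN hΓ₀).2 hall))
        exact ⟨u, fun hs => hu ((ih u).1 hs)⟩
  | sad a φ ih =>
    intro Δ
    simp only [Satisfies]
    constructor
    · rintro ⟨ha, hbb, hcc⟩
      have hK : Formula.know a φ ∈ Δ.1 := by
        by_contra hn
        obtain ⟨Δ', hind, hφ⟩ := existsK hΓ₀ a Δ hn
        exact hφ ((ih Δ').1 (ha Δ' hind))
      have hφΔ : φ ∈ Δ.1 := Δ.mcs.mp (Δ.mcs.prv_mem Prv.truthK) hK
      have hb' : ∀ u v : Wld Γ₀, Formula.neg φ ∉ u.1 → Formula.neg φ ∈ v.1 →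
          prefC Γ₀ a u v := by
        intro u v h1 h2
        have hφu : φ ∈ u.1 := by
          by_contra hn
          exact h1 (u.mcs.neg_mem.2 hn)
        have hφv : φ ∉ v.1 := v.mcs.neg_mem.1 h2
        exact hbb u v ((ih u).2 hφu) (fun hs => hφv ((ih v).1 hs))
      have hc' : ∃ u : Wld Γ₀, Formula.neg φ ∉ u.1 :=
        ⟨Δ, fun hm => Δ.mcs.neg_mem.1 hm hφΔ⟩
      have hd' : ∃ v : Wld Γ₀, Formula.neg φ ∈ v.1 := by
        obtain ⟨u, hu⟩ := hcc
        exact ⟨u, u.mcs.neg_mem.2 (fun hm => hu ((ih u).2 hm))⟩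
      have hkey := keyEmo hΓ₀ a (Formula.neg φ) hb' hc' hd'
      have hkey2 : Formula.nbar (Formula.happy a (Formula.neg φ)) ∈ Γ₀ ∨
          Formula.nbar (Formula.sad a φ) ∈ Γ₀ := by
        rcases hkey with h | h
        · exact Or.inl h
        · refine Or.inr (transfer_sad hΓ₀ a h ?_)
          intro Δ'
          rw [Δ'.mcs.neg_mem, Δ'.mcs.neg_mem, not_not]
      have hor : (Formula.nbar (Formula.happy a (Formula.neg φ))).or
          (Formula.nbar (Formula.sad a φ)) ∈ Δ.1 := by
        apply Δ.mcs.or_mem.2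
        rcases hkey2 with h | h
        · exact Or.inl (nbar_shared hΓ₀ Δ h)
        · exact Or.inr (nbar_shared hΓ₀ Δ h)
      exact Δ.mcs.mp (Δ.mcs.mp (Δ.mcs.prv_mem Prv.predictS) hor) hK
    · intro hmem
      have hK : Formula.know a φ ∈ Δ.1 := Δ.mcs.mp (Δ.mcs.prv_mem (prv_sad_know a φ)) hmem
      refine ⟨?_, ?_, ?_⟩
      · intro u hind
        exact (ih u).2 (hind _ hK)
      · intro u u' hsat hnsat
        have h1 : φ ∈ u.1 := (ih u).1 hsat
        have h2 : φ ∉ u'.1 := fun hm => hnsat ((ih u').2 hm)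
        refine ⟨(φ, false), ?_, ?_, ?_⟩
        · simpa [GoodW] using (nbar_iff_exists hΓ₀).2 ⟨Δ, hmem⟩
        · simpa [semW] using h1
        · simpa [semW] using h2
      · have h1 : Formula.neg (Formula.nec φ) ∈ Δ.1 :=
          Δ.mcs.mp (Δ.mcs.prv_mem Prv.counterS) hmem
        have h2 : Formula.nec φ ∉ Γ₀ :=
          fun hm => Δ.mcs.neg_mem.1 h1 ((nec_mem_iff hΓ₀ Δ).2 hm)
        obtain ⟨u, hu⟩ := not_forall.1 (fun hall => h2 ((globalN hΓ₀).2 hall))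
        exact ⟨u, fun hs => hu ((ih u).1 hs)⟩

end Completeness6

/-- strong completeness. -/
theorem strong_completeness {A P : Type} [Countable A] [Countable P] [Nonempty P]
    (X : Set (Formula A P)) (φ : Formula A P) (h : ¬ Deriv X φ) :
    ∃ (M : Model A P) (w : M.W),
      (∀ χ ∈ X, Satisfies M w χ) ∧ ¬ Satisfies M w φ := by
  have hcons : Consistent (insert (Formula.neg φ) X) := by
    intro hall
    apply h
    exact Deriv.mp (Deriv.thm (Prv.taut (taut_clavius φ))) (deduction (hall φ))
  obtain ⟨Γ₀, hsub, hΓ₀⟩ := lindenbaum hcons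
  let w : Wld Γ₀ := ⟨Γ₀, hΓ₀, fun ψ hψ => hΓ₀.mp (hΓ₀.prv_mem Prv.truthN) hψ⟩
  refine ⟨canonM hΓ₀, w, ?_, ?_⟩
  · intro χ hχ
    exact (truth_lemma hΓ₀ χ w).2 (hsub (Set.mem_insert_of_mem _ hχ))
  · intro hs
    have hm := (truth_lemma hΓ₀ φ w).1 hs
    exact hΓ₀.neg_mem.1 (hsub (Set.mem_insert _ _)) hm
end EmotionLogic
end
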